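/- arXiv:1703.07906 — 5 statements merged into one kernel-verified Lean document; each statement's English description precedes it below -/
import Mathlib

section
/- Let M be a d×d matrix over a field k, λ ∈ k, and M_λ = M - λI. The isomorphism from {X ∈ Mat_{d,i}(k) : M X = X J_i(λ)} to Ker(M_λ^i) is given by X ↦ (last column of X), with inverse v ↦ [M_λ^{i-1}v, ..., M_λ v, v]. -/
/-- The `i × i` Jordan cell with eigenvalue `lam`. -/
def jordanCell {k : Type} [Field k] (i : ℕ) (lam : k) : Matrix (Fin i) (Fin i) k :=
  fun a b => if a = b then lam else if (a : ℕ) + 1 = (b : ℕ) then 1 else 0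

/-- The inverse map `v ↦ [M_lam^{i-1} v, …, M_lam v, v]` (here the Jordan cell has size
`i + 1`, so the `c`-th column of `jordanColumns M lam v` is `M_lam^{i-c} v`). -/
def jordanColumns {k : Type} [Field k] {d : ℕ} (i : ℕ) (M : Matrix (Fin d) (Fin d) k)
    (lam : k) (v : Fin d → k) : Matrix (Fin d) (Fin (i + 1)) k :=
  fun r c => (((M - lam • 1) ^ (i - (c : ℕ))).mulVec v) r

namespace JordanAux

variable {k : Type} [Field k] {d : ℕ}

/-- nilpotent shift part of the Jordan cell -/
def shiftN (k : Type) [Field k] (n : ℕ) : Matrix (Fin n) (Fin n) k :=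
  fun a b => if (a : ℕ) + 1 = (b : ℕ) then 1 else 0

lemma jordanCell_eq (n : ℕ) (lam : k) :
    jordanCell n lam = lam • (1 : Matrix (Fin n) (Fin n) k) + shiftN k n := by
  ext a b
  rcases eq_or_ne a b with h | h
  · subst h
    simp [jordanCell, shiftN, Matrix.one_apply]
  · have : (a : ℕ) ≠ (b : ℕ) := fun hh => h (Fin.ext hh)
    simp [jordanCell, shiftN, Matrix.one_apply, h]

lemma mul_shiftN_zero {i : ℕ} (X : Matrix (Fin d) (Fin (i + 1)) k) (r : Fin d) :
    (X * shiftN k (i + 1)) r 0 = 0 := by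
  simp [Matrix.mul_apply, shiftN]

lemma mul_shiftN_succ {i : ℕ} (X : Matrix (Fin d) (Fin (i + 1)) k) (r : Fin d) (c : Fin i) :
    (X * shiftN k (i + 1)) r c.succ = X r c.castSucc := by
  rw [Matrix.mul_apply]
  rw [Finset.sum_eq_single c.castSucc]
  · simp [shiftN]
  · intro b _ hb
    have hne : ¬ ((b : ℕ) + 1 = (c.succ : ℕ)) := by
      simp only [Fin.val_succ]
      intro hh
      apply hb
      apply Fin.ext
      simp only [Fin.coe_castSucc]
      omega
    simp only [shiftN]
    rw [if_neg hne, mul_zero]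
  · simp

lemma col_mul {n : ℕ} (M : Matrix (Fin d) (Fin d) k) (X : Matrix (Fin d) (Fin n) k)
    (c : Fin n) : (fun r => (M * X) r c) = M.mulVec (fun r => X r c) := by
  funext r
  simp [Matrix.mul_apply, Matrix.mulVec, dotProduct]

/-- columnwise characterization -/
lemma key {i : ℕ} (M : Matrix (Fin d) (Fin d) k) (lam : k)
    (X : Matrix (Fin d) (Fin (i + 1)) k) :
    M * X = X * jordanCell (i + 1) lam ↔
      ((M - lam • 1).mulVec (fun r => X r 0) = 0) ∧
      (∀ c : Fin i, (M - lam • 1).mulVec (fun r => X r c.succ) = fun r => X r c.castSucc) := by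
  have hsub : ∀ c : Fin (i+1),
      (M - lam • 1).mulVec (fun r => X r c) = fun r => (M * X - lam • X) r c := by
    intro c
    have h1 : (M - lam • 1).mulVec (fun r => X r c)
        = M.mulVec (fun r => X r c) - lam • (fun r => X r c) := by
      rw [Matrix.sub_mulVec, Matrix.smul_mulVec, Matrix.one_mulVec]
    rw [h1]
    funext r
    simp [Matrix.mul_apply, Matrix.mulVec, dotProduct]
  have hX1 : X * (lam • (1 : Matrix (Fin (i+1)) (Fin (i+1)) k)) = lam • X := by
    rw [Matrix.mul_smul, Matrix.mul_one]
  have hiff : M * X = X * jordanCell (i + 1) lam ↔ M * X - lam • X = X * shiftN k (i+1) := by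
    rw [jordanCell_eq, Matrix.mul_add, hX1, sub_eq_iff_eq_add']
  rw [hiff]
  constructor
  · intro h
    constructor
    · rw [hsub]; funext r; rw [h]; simpa using mul_shiftN_zero X r
    · intro c; rw [hsub]; funext r; rw [h]; simpa using mul_shiftN_succ X r c
  · rintro ⟨h0, hs⟩
    ext r c
    rcases Fin.eq_zero_or_eq_succ c with rfl | ⟨c', rfl⟩
    · rw [mul_shiftN_zero X r]
      have := congrFun ((hsub 0) ▸ h0) r
      simpa using this
    · rw [mul_shiftN_succ X r c']
      have := congrFun ((hsub c'.succ) ▸ hs c') r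
      simpa using this

end JordanAux

open JordanAux

/-- the isomorphism from `{X | M X = X J_{i+1}(lam)}` to `Ker (M_lam^{i+1})`
is given by taking the last column of `X`; its inverse is `v ↦ [M_lam^i v, …, M_lam v, v]`. -/
theorem jordan_hom_space_iso_explicit {k : Type} [Field k] {d : ℕ} (i : ℕ)
    (M : Matrix (Fin d) (Fin d) k) (lam : k) :
    (∀ X : Matrix (Fin d) (Fin (i + 1)) k, M * X = X * jordanCell (i + 1) lam →
        ((M - lam • 1) ^ (i + 1)).mulVec (fun r => X r (Fin.last i)) = 0) ∧
    (∀ v : Fin d → k, ((M - lam • 1) ^ (i + 1)).mulVec v = 0 →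
        M * jordanColumns i M lam v = jordanColumns i M lam v * jordanCell (i + 1) lam) ∧
    (∀ X : Matrix (Fin d) (Fin (i + 1)) k, M * X = X * jordanCell (i + 1) lam →
        jordanColumns i M lam (fun r => X r (Fin.last i)) = X) ∧
    (∀ v : Fin d → k, ((M - lam • 1) ^ (i + 1)).mulVec v = 0 →
        (fun r => jordanColumns i M lam v r (Fin.last i)) = v) := by
  have pow_col : ∀ X : Matrix (Fin d) (Fin (i + 1)) k,
      M * X = X * jordanCell (i + 1) lam →
      ∀ m : ℕ, ∀ c : Fin (i + 1), m ≤ (c : ℕ) →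
        ((M - lam • 1) ^ m).mulVec (fun r => X r c)
          = fun r => X r ⟨(c : ℕ) - m, by omega⟩ := by
    intro X hX m
    induction m with
    | zero => intro c _; simp [Matrix.one_mulVec]
    | succ m ih =>
      intro c hc
      have hkey := (key M lam X).mp hX
      have h1 : (⟨(c : ℕ) - m, by omega⟩ : Fin (i + 1)) =
          Fin.succ ⟨(c : ℕ) - m - 1, by omega⟩ := by
        apply Fin.ext; simp only [Fin.val_succ]; omega
      have h2 : (Fin.castSucc ⟨(c : ℕ) - m - 1, by omega⟩ : Fin (i + 1)) =
          ⟨(c : ℕ) - (m + 1), by omega⟩ := by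
        apply Fin.ext; simp only [Fin.coe_castSucc]; omega
      rw [pow_succ', ← Matrix.mulVec_mulVec, ih c (by omega), h1, hkey.2, h2]
  constructor
  · -- part 1
    intro X hX
    have hkey := (key M lam X).mp hX
    have h0 := pow_col X hX i (Fin.last i) (by simp [Fin.last])
    rw [pow_succ', ← Matrix.mulVec_mulVec, h0]
    have he : (⟨(Fin.last i : ℕ) - i, by omega⟩ : Fin (i + 1)) = 0 := by
      apply Fin.ext; simp
    rw [he]
    exact hkey.1
  refine ⟨?_, ?_, ?_⟩
  · -- part 2
    intro v hv
    rw [key]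
    constructor
    · show (M - lam • 1).mulVec (((M - lam • 1) ^ i).mulVec v) = 0
      rw [Matrix.mulVec_mulVec, ← pow_succ']
      exact hv
    · intro c
      show (M - lam • 1).mulVec (((M - lam • 1) ^ (i - ((c : ℕ) + 1))).mulVec v)
          = ((M - lam • 1) ^ (i - (c : ℕ))).mulVec v
      rw [Matrix.mulVec_mulVec, ← pow_succ']
      have he : i - ((c : ℕ) + 1) + 1 = i - (c : ℕ) := by
        have := c.isLt; omega
      rw [he]
  · -- part 3
    intro X hX
    ext r c
    have := congrFun (pow_col X hX (i - (c : ℕ)) (Fin.last i) (by simp [Fin.last])) r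
    show (((M - lam • 1) ^ (i - (c : ℕ))).mulVec (fun r => X r (Fin.last i))) r = X r c
    rw [this]
    congr 1
    apply Fin.ext
    simp only [Fin.last]
    have := c.isLt
    omega
  · -- part 4
    intro v hv
    funext r
    simp [jordanColumns, Fin.last, Matrix.one_mulVec]
end

section
/- Let M = (k^{a_1} →^{M_1} ... →^{M_{n-1}} k^{a_n}) be a representation of the equioriented A_n quiver over a field k, with the convention M_0 := 0 and M_n := 0. For 1 ≤ b ≤ d ≤ n, the multiplicity of the interval module I(b,d) in the indecomposable decomposition of M equals rank(M_d⋯M_{b-1}) + rank(M_{d-1}⋯M_b) - rank(M_{d-1}⋯M_{b-1}) - rank(M_d⋯M_b) when b < d, and equals rank(M_d M_{d-1}) + a_b - rank(M_{d-1}) - rank(M_d) when b = d. -/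
/-- Composite of the structure maps of an `A_n`-type representation:
`chainMap a Ms b len : k^{a b} → k^{a (b+len)}` is `M_{b+len-1} ⋯ M_{b+1} M_b`. -/
def chainMap {k : Type} [Field k] (a : ℕ → ℕ)
    (Ms : ∀ i : ℕ, Matrix (Fin (a (i + 1))) (Fin (a i)) k) :
    (b len : ℕ) → ((Fin (a b) → k) →ₗ[k] (Fin (a (b + len)) → k))
  | _, 0 => LinearMap.id
  | b, (len + 1) => (Ms (b + len)).mulVecLin ∘ₗ chainMap a Ms b len

/-- `rank (M_d ⋯ M_b)` (the rank of the composite of the structure maps from vertex `b`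
through vertex `d`, i.e. of `chainMap a Ms b (d + 1 - b)`). -/
noncomputable def chainRank {k : Type} [Field k] (a : ℕ → ℕ)
    (Ms : ∀ i : ℕ, Matrix (Fin (a (i + 1))) (Fin (a i)) k) (b d : ℕ) : ℕ :=
  Module.finrank k (LinearMap.range (chainMap a Ms b (d + 1 - b)))

/-- The vector space at vertex `i` of the direct sum `⊕_j I(β j, δ j)` of interval
representations: one copy of `k` for each `j` whose interval contains `i`. -/
abbrev intvSpace {k : Type} [Field k] {N : ℕ} (β δ : Fin N → ℕ) (i : ℕ) : Type :=
  { j : Fin N // β j ≤ i ∧ i ≤ δ j } → k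

/-- The structure map from vertex `i` to vertex `i + 1` of `⊕_j I(β j, δ j)`:
the identity on coordinates alive at both `i` and `i + 1`, zero otherwise. -/
def intvStep {k : Type} [Field k] {N : ℕ} (β δ : Fin N → ℕ) (i : ℕ) :
    intvSpace (k := k) β δ i →ₗ[k] intvSpace (k := k) β δ (i + 1) where
  toFun x jh := if h : β jh.1 ≤ i ∧ i ≤ δ jh.1 then x ⟨jh.1, h⟩ else 0
  map_add' x y := by
    funext jh
    by_cases h : β jh.1 ≤ i ∧ i ≤ δ jh.1 <;> simp [h]
  map_smul' c x := by
    funext jh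
    by_cases h : β jh.1 ≤ i ∧ i ≤ δ jh.1 <;> simp [h]

open Classical

-- zero lemmas
lemma chainMap_zero_left {k : Type} [Field k] (a : ℕ → ℕ)
    (Ms : ∀ i : ℕ, Matrix (Fin (a (i + 1))) (Fin (a i)) k) (h0 : Ms 0 = 0) :
    ∀ len, chainMap a Ms 0 (len + 1) = 0 := by
  intro len
  induction len with
  | zero => show (Ms 0).mulVecLin ∘ₗ LinearMap.id = 0; simp [h0]
  | succ m ih =>
      show (Ms (0 + (m+1))).mulVecLin ∘ₗ chainMap a Ms 0 (m+1) = 0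
      rw [ih, LinearMap.comp_zero]

lemma chainMap_zero_right {k : Type} [Field k] (n : ℕ) (a : ℕ → ℕ)
    (Ms : ∀ i : ℕ, Matrix (Fin (a (i + 1))) (Fin (a i)) k) (hn : Ms n = 0)
    (b len : ℕ) (h : b + len = n) : chainMap a Ms b (len + 1) = 0 := by
  subst h
  show (Ms (b + len)).mulVecLin ∘ₗ chainMap a Ms b len = 0
  rw [hn]
  simp

def intvChain {k : Type} [Field k] {N : ℕ} (β δ : Fin N → ℕ) :
    (p len : ℕ) → (intvSpace (k := k) β δ p →ₗ[k] intvSpace (k := k) β δ (p + len))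
  | _, 0 => LinearMap.id
  | p, (len + 1) => (intvStep β δ (p + len)).comp (intvChain β δ p len)

lemma intvChain_apply {k : Type} [Field k] {N : ℕ} (β δ : Fin N → ℕ) :
    ∀ (len p : ℕ) (x : intvSpace (k := k) β δ p)
      (jh : { j : Fin N // β j ≤ p + len ∧ p + len ≤ δ j }),
      intvChain β δ p len x jh
        = if h : β jh.1 ≤ p then
            x ⟨jh.1, h, le_trans (Nat.le_add_right p len) jh.2.2⟩ else 0 := by
  intro len
  induction len with
  | zero =>
      intro p x jh
      rw [dif_pos (show β jh.1 ≤ p from jh.2.1)]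
      rfl
  | succ m ih =>
      intro p x jh
      show intvStep β δ (p + m) (intvChain β δ p m x) jh = _
      show (if h : β jh.1 ≤ p + m ∧ p + m ≤ δ jh.1 then
              intvChain β δ p m x ⟨jh.1, h⟩ else 0) = _
      by_cases hb : β jh.1 ≤ p
      · have hc : β jh.1 ≤ p + m ∧ p + m ≤ δ jh.1 :=
          ⟨le_trans hb (Nat.le_add_right p m), le_trans (Nat.le_succ (p + m)) jh.2.2⟩
        rw [dif_pos hc, ih, dif_pos hb]
      · rw [dif_neg hb]
        by_cases h : β jh.1 ≤ p + m ∧ p + m ≤ δ jh.1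
        · rw [dif_pos h, ih]
          exact dif_neg hb
        · exact dif_neg h

def intvExt {k : Type} [Field k] {N : ℕ} (β δ : Fin N → ℕ) (p len : ℕ) :
    ({ j : Fin N // β j ≤ p ∧ p + len ≤ δ j } → k) →ₗ[k]
      intvSpace (k := k) β δ (p + len) where
  toFun y jh := if h : β jh.1 ≤ p then y ⟨jh.1, h, jh.2.2⟩ else 0
  map_add' x y := by
    funext jh
    by_cases h : β jh.1 ≤ p <;> simp [h]
  map_smul' c x := by
    funext jh
    by_cases h : β jh.1 ≤ p <;> simp [h]

lemma intvChain_rank {k : Type} [Field k] {N : ℕ} (β δ : Fin N → ℕ) (p len : ℕ) :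
    Module.finrank k (LinearMap.range (intvChain (k := k) β δ p len))
      = Fintype.card { j : Fin N // β j ≤ p ∧ p + len ≤ δ j } := by
  have hfac : intvChain (k := k) β δ p len
      = (intvExt β δ p len).comp
          (LinearMap.funLeft k k
            (fun t : { j : Fin N // β j ≤ p ∧ p + len ≤ δ j } =>
              (⟨t.1, t.2.1, le_trans (Nat.le_add_right p len) t.2.2⟩ :
                { j : Fin N // β j ≤ p ∧ p ≤ δ j }))) := by
    apply LinearMap.ext
    intro x
    funext jh
    rw [intvChain_apply]
    rfl
  have hsurj : Function.Surjective
      (LinearMap.funLeft k k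
        (fun t : { j : Fin N // β j ≤ p ∧ p + len ≤ δ j } =>
          (⟨t.1, t.2.1, le_trans (Nat.le_add_right p len) t.2.2⟩ :
            { j : Fin N // β j ≤ p ∧ p ≤ δ j }))) := by
    apply LinearMap.funLeft_surjective_of_injective
    intro s t hst
    have h1 : (⟨s.1, s.2.1, le_trans (Nat.le_add_right p len) s.2.2⟩ :
        { j : Fin N // β j ≤ p ∧ p ≤ δ j }).1
        = (⟨t.1, t.2.1, le_trans (Nat.le_add_right p len) t.2.2⟩ :
        { j : Fin N // β j ≤ p ∧ p ≤ δ j }).1 := congrArg Subtype.val hst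
    exact Subtype.ext h1
  have hinj : Function.Injective (intvExt (k := k) β δ p len) := by
    intro y z hyz
    funext t
    have := congrFun hyz ⟨t.1, le_trans t.2.1 (Nat.le_add_right p len), t.2.2⟩
    simpa [intvExt, t.2.1] using this
  rw [hfac, LinearMap.range_comp, LinearMap.range_eq_top.mpr hsurj, Submodule.map_top]
  rw [LinearMap.finrank_range_of_inj hinj]
  exact Module.finrank_fintype_fun_eq_card k

lemma conj_chain {k : Type} [Field k] (n : ℕ) (a : ℕ → ℕ)
    (Ms : ∀ i : ℕ, Matrix (Fin (a (i + 1))) (Fin (a i)) k)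
    {N : ℕ} (β δ : Fin N → ℕ)
    (e : ∀ i : ℕ, 1 ≤ i → i ≤ n → ((Fin (a i) → k) ≃ₗ[k] intvSpace (k := k) β δ i))
    (he : ∀ (i : ℕ) (h1 : 1 ≤ i) (h2 : i < n) (x : Fin (a i) → k),
      intvStep β δ i (e i h1 (le_of_lt h2) x)
        = e (i + 1) (Nat.le_succ_of_le h1) h2 ((Ms i).mulVec x)) :
    ∀ (len p : ℕ) (h1 : 1 ≤ p) (hp : p ≤ n) (h1' : 1 ≤ p + len) (h2 : p + len ≤ n)
      (x : Fin (a p) → k),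
      e (p + len) h1' h2 (chainMap a Ms p len x)
        = intvChain β δ p len (e p h1 hp x) := by
  intro len
  induction len with
  | zero => intro p h1 hp h1' h2 x; rfl
  | succ m ih =>
      intro p h1 hp h1' h2 x
      have hm1 : 1 ≤ p + m := le_trans h1 (Nat.le_add_right p m)
      have hm2 : p + m ≤ n := le_trans (Nat.le_succ (p + m)) h2
      have hlt : p + m < n := h2
      show e (p + (m + 1)) h1' h2 ((Ms (p + m)).mulVec (chainMap a Ms p m x))
        = intvStep β δ (p + m) (intvChain β δ p m (e p h1 hp x))
      rw [← ih p h1 hp hm1 hm2 x]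
      exact (he (p + m) hm1 hlt (chainMap a Ms p m x)).symm

lemma chainRank_filter {k : Type} [Field k] (n : ℕ) (a : ℕ → ℕ)
    (Ms : ∀ i : ℕ, Matrix (Fin (a (i + 1))) (Fin (a i)) k)
    (hMs0 : Ms 0 = 0) (hMsn : Ms n = 0)
    {N : ℕ} (β δ : Fin N → ℕ) (hβδ : ∀ j, 1 ≤ β j ∧ β j ≤ δ j ∧ δ j ≤ n)
    (e : ∀ i : ℕ, 1 ≤ i → i ≤ n → ((Fin (a i) → k) ≃ₗ[k] intvSpace (k := k) β δ i))
    (he : ∀ (i : ℕ) (h1 : 1 ≤ i) (h2 : i < n) (x : Fin (a i) → k),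
      intvStep β δ i (e i h1 (le_of_lt h2) x)
        = e (i + 1) (Nat.le_succ_of_le h1) h2 ((Ms i).mulVec x))
    (p q : ℕ) (hpq : p < q) (hq : q ≤ n + 1) :
    Module.finrank k (LinearMap.range (chainMap a Ms p (q - p)))
      = (Finset.univ.filter (fun j => β j ≤ p ∧ q ≤ δ j)).card := by
  rcases Nat.eq_zero_or_pos p with hp0 | hp1
  · -- p = 0 : the chain contains Ms 0 = 0
    subst hp0
    obtain ⟨m, rfl⟩ := Nat.exists_eq_succ_of_ne_zero (by omega : q ≠ 0)
    have hz : chainMap a Ms 0 (m + 1 - 0) = 0 := by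
      rw [Nat.sub_zero]; exact chainMap_zero_left a Ms hMs0 m
    rw [hz, LinearMap.range_zero, finrank_bot]
    symm
    rw [Finset.card_eq_zero, Finset.filter_eq_empty_iff]
    intro j _
    have := (hβδ j).1
    omega
  · rcases Nat.lt_or_ge n q with hqn | hqn
    · -- q = n + 1 : the chain contains Ms n = 0
      have hqe : q = n + 1 := by omega
      subst hqe
      have hpn : p ≤ n := by omega
      have hlen : n + 1 - p = (n - p) + 1 := by omega
      rw [hlen, chainMap_zero_right n a Ms hMsn p (n - p) (by omega),
        LinearMap.range_zero, finrank_bot]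
      symm
      rw [Finset.card_eq_zero, Finset.filter_eq_empty_iff]
      intro j _
      have := (hβδ j).2.2
      omega
    · -- 1 ≤ p, q ≤ n : conjugate by the isomorphisms e
      obtain ⟨len, rfl⟩ : ∃ len, q = p + len := ⟨q - p, by omega⟩
      rw [Nat.add_sub_cancel_left]
      have h1' : 1 ≤ p + len := by omega
      have hpn : p ≤ n := by omega
      have hcomp : (e (p + len) h1' hqn).toLinearMap ∘ₗ chainMap a Ms p len
          = (intvChain β δ p len) ∘ₗ (e p hp1 hpn).toLinearMap :=
        LinearMap.ext (conj_chain n a Ms β δ e he len p hp1 hpn h1' hqn)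
      have step1 : Module.finrank k (LinearMap.range (chainMap a Ms p len))
          = Module.finrank k (LinearMap.range (intvChain (k := k) β δ p len)) := by
        calc Module.finrank k (LinearMap.range (chainMap a Ms p len))
            = Module.finrank k ((LinearMap.range (chainMap a Ms p len)).map
                (e (p + len) h1' hqn).toLinearMap) :=
              (LinearEquiv.finrank_map_eq _ _).symm
          _ = Module.finrank k (LinearMap.range
                ((e (p + len) h1' hqn).toLinearMap ∘ₗ chainMap a Ms p len)) := by
              rw [LinearMap.range_comp]
          _ = Module.finrank k (LinearMap.range
                ((intvChain (k := k) β δ p len) ∘ₗ (e p hp1 hpn).toLinearMap)) := by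
              rw [hcomp]
          _ = Module.finrank k (LinearMap.range (intvChain (k := k) β δ p len)) := by
              rw [LinearMap.range_comp_of_range_eq_top _ (LinearEquiv.range _)]
      rw [step1, intvChain_rank, Fintype.card_subtype]


/-- if the representation `M = (k^{a 1} →^{Ms 1} ⋯ →^{Ms (n-1)} k^{a n})` of
the equioriented `A_n` quiver decomposes as `⊕_{j} I(β j, δ j)` (Gabriel's theorem), then,
with the conventions `Ms 0 = 0` and `Ms n = 0`, the multiplicity of the interval module
`I(b, d)` equals
`rank(M_d⋯M_{b-1}) + rank(M_{d-1}⋯M_b) - rank(M_{d-1}⋯M_{b-1}) - rank(M_d⋯M_b)` if `b < d`,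
and `rank(M_d M_{d-1}) + a b - rank(M_{d-1}) - rank(M_d)` if `b = d`. -/
theorem interval_multiplicity {k : Type} [Field k] (n : ℕ) (a : ℕ → ℕ)
    (Ms : ∀ i : ℕ, Matrix (Fin (a (i + 1))) (Fin (a i)) k)
    (hMs0 : Ms 0 = 0) (hMsn : Ms n = 0)
    (N : ℕ) (β δ : Fin N → ℕ) (hβδ : ∀ j, 1 ≤ β j ∧ β j ≤ δ j ∧ δ j ≤ n)
    (e : ∀ i : ℕ, 1 ≤ i → i ≤ n → ((Fin (a i) → k) ≃ₗ[k] intvSpace (k := k) β δ i))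
    (he : ∀ (i : ℕ) (h1 : 1 ≤ i) (h2 : i < n) (x : Fin (a i) → k),
      intvStep β δ i (e i h1 (le_of_lt h2) x)
        = e (i + 1) (Nat.le_succ_of_le h1) h2 ((Ms i).mulVec x))
    (b d : ℕ) (hb : 1 ≤ b) (hbd : b ≤ d) (hdn : d ≤ n) :
    (b < d → ((Finset.univ.filter (fun j => β j = b ∧ δ j = d)).card : ℤ)
      = (chainRank a Ms (b - 1) d : ℤ) + chainRank a Ms b (d - 1)
        - chainRank a Ms (b - 1) (d - 1) - chainRank a Ms b d) ∧
    (b = d → ((Finset.univ.filter (fun j => β j = b ∧ δ j = d)).card : ℤ)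
      = (chainRank a Ms (d - 1) d : ℤ) + a b
        - chainRank a Ms (d - 1) (d - 1) - chainRank a Ms d d) := by
  have hrank : ∀ p d' : ℕ, p < d' + 1 → d' ≤ n →
      chainRank a Ms p d'
        = (Finset.univ.filter (fun j => β j ≤ p ∧ d' + 1 ≤ δ j)).card :=
    fun p d' h1 h2 =>
      chainRank_filter n a Ms hMs0 hMsn β δ hβδ e he p (d' + 1) h1 (by omega)
  have count : (Finset.univ.filter (fun j => β j = b ∧ δ j = d)).card
      + (Finset.univ.filter (fun j => β j ≤ b - 1 ∧ d ≤ δ j)).card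
      + (Finset.univ.filter (fun j => β j ≤ b ∧ d + 1 ≤ δ j)).card
      = (Finset.univ.filter (fun j => β j ≤ b ∧ d ≤ δ j)).card
      + (Finset.univ.filter (fun j => β j ≤ b - 1 ∧ d + 1 ≤ δ j)).card := by
    simp only [Finset.card_filter]
    rw [← Finset.sum_add_distrib, ← Finset.sum_add_distrib, ← Finset.sum_add_distrib]
    apply Finset.sum_congr rfl
    intro j _
    split_ifs <;> omega
  have hd1 : d - 1 + 1 = d := by omega
  constructor
  · intro hlt
    have r1 := hrank (b - 1) d (by omega) hdn
    have r2 := hrank b (d - 1) (by omega) (by omega)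
    have r3 := hrank (b - 1) (d - 1) (by omega) (by omega)
    have r4 := hrank b d (by omega) hdn
    rw [hd1] at r2 r3
    rw [r1, r2, r3, r4]
    omega
  · intro heq
    subst heq
    have ha : a b = (Finset.univ.filter (fun j => β j ≤ b ∧ b ≤ δ j)).card := by
      have hfr := (e b hb hdn).finrank_eq
      rw [Module.finrank_fintype_fun_eq_card, Module.finrank_fintype_fun_eq_card,
        Fintype.card_fin, Fintype.card_subtype] at hfr
      exact hfr
    have r1 := hrank (b - 1) b (by omega) hdn
    have r3 := hrank (b - 1) (b - 1) (by omega) (by omega)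
    have r4 := hrank b b (by omega) hdn
    rw [hd1] at r3
    rw [r1, r3, r4, ha]
    omega
end

section
/- With notation as in the A_n persistence formula, set R(b,d) := rank(M_d⋯M_b) - rank(M_{d-1}⋯M_b) for b < d and R(b,b) := rank(M_b) - a_b. Then the multiplicity of I(b,d) in M equals R(b-1,d) - R(b,d). -/
open Classical

/-- The quantity `R(b,d)` from the `A_n` persistence formula:
`R(b,d) = rank(M_d⋯M_b) - rank(M_{d-1}⋯M_b)` for `b < d`, and
`R(b,b) = rank(M_b) - a b`. -/
noncomputable def Rquant {k : Type} [Field k] (a : ℕ → ℕ)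
    (Ms : ∀ i : ℕ, Matrix (Fin (a (i + 1))) (Fin (a i)) k) (b d : ℕ) : ℤ :=
  if b < d then (chainRank a Ms b d : ℤ) - chainRank a Ms b (d - 1)
  else (chainRank a Ms b b : ℤ) - a b

open Finset

lemma card_filter_eq_add_of_iff {ι : Type*} [Fintype ι] {p q r : ι → Prop} [DecidablePred p]
    [DecidablePred q] [DecidablePred r] (hpqr : ∀ j, p j ↔ q j ∨ r j) (hqr : ∀ j, q j → ¬ r j) :
    #{j | p j} = #{j | q j} + #{j | r j} := by
  rw [← card_union_of_disjoint (disjoint_filter.2 fun j _ => hqr j), ← filter_or]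
  simp only [hpqr]

namespace IntervalModule

variable {k : Type} [Field k] {N : ℕ} (β δ : Fin N → ℕ)

/-- The structure map from vertex `b` to vertex `c` of `⊕_j I(β j, δ j)`. -/
def intvMap (b c : ℕ) : intvSpace (k := k) β δ b →ₗ[k] intvSpace (k := k) β δ c where
  toFun x jh := if h : β jh.1 ≤ b ∧ b ≤ δ jh.1 then x ⟨jh.1, h⟩ else 0
  map_add' x y := by
    funext jh
    by_cases h : β jh.1 ≤ b ∧ b ≤ δ jh.1 <;> simp [h]
  map_smul' c x := by
    funext jh
    by_cases h : β jh.1 ≤ b ∧ b ≤ δ jh.1 <;> simp [h]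

lemma intvMap_apply {b c : ℕ} (x : intvSpace (k := k) β δ b)
    (jh : { j : Fin N // β j ≤ c ∧ c ≤ δ j }) :
    intvMap β δ b c x jh = if h : β jh.1 ≤ b ∧ b ≤ δ jh.1 then x ⟨jh.1, h⟩ else 0 :=
  rfl

lemma intvStep_eq_intvMap (i : ℕ) : intvStep (k := k) β δ i = intvMap β δ i (i + 1) := rfl

lemma intvMap_self (b : ℕ) : intvMap (k := k) β δ b b = LinearMap.id := by
  ext x jh
  simp [intvMap_apply, jh.2]

lemma intvMap_comp {b c d : ℕ} (hbc : b ≤ c) (hcd : c ≤ d) :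
    intvMap (k := k) β δ c d ∘ₗ intvMap β δ b c = intvMap β δ b d := by
  ext x jh
  simp only [LinearMap.comp_apply, intvMap_apply]
  by_cases hb : β jh.1 ≤ b ∧ b ≤ δ jh.1
  · have hc : β jh.1 ≤ c ∧ c ≤ δ jh.1 := ⟨by omega, by omega⟩
    simp [hb, hc]
  · by_cases hc : β jh.1 ≤ c ∧ c ≤ δ jh.1 <;> simp [hb, hc]

def numContaining (b c : ℕ) : ℕ := #{j | β j ≤ b ∧ c ≤ δ j}

lemma finrank_intvSpace (i : ℕ) :
    Module.finrank k (intvSpace (k := k) β δ i) = numContaining β δ i i := by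
  rw [Module.finrank_fintype_fun_eq_card, Fintype.card_subtype]
  rfl

lemma finrank_range_intvMap {b c : ℕ} (hbc : b ≤ c) :
    Module.finrank k (LinearMap.range (intvMap (k := k) β δ b c)) = numContaining β δ b c := by
  let S := { jh : { j : Fin N // β j ≤ c ∧ c ≤ δ j } // β jh.1 ≤ b }
  let g : S → { j : Fin N // β j ≤ b ∧ b ≤ δ j } := fun s => ⟨s.1.1, s.2, hbc.trans s.1.2.2⟩
  have hg : Function.Injective g := fun s t hst =>
    Subtype.ext (Subtype.ext (congrArg Subtype.val hst :))
  -- restriction to the intervals alive at both `b` and `c`, then extension by zero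
  have hfac : intvMap (k := k) β δ b c
      = Function.ExtendByZero.linearMap k Subtype.val ∘ₗ LinearMap.funLeft k k g := by
    refine LinearMap.ext fun x => funext fun jh => ?_
    by_cases h : β jh.1 ≤ b
    · calc intvMap β δ b c x jh = x (g ⟨jh, h⟩) := dif_pos ⟨h, hbc.trans jh.2.2⟩
        _ = _ := (Subtype.val_injective.extend_apply (LinearMap.funLeft k k g x) 0 ⟨jh, h⟩).symm
    · calc intvMap β δ b c x jh = 0 := dif_neg fun hb => h hb.1
        _ = _ := (Function.extend_apply' (f := (Subtype.val : S → _)) (LinearMap.funLeft k k g x) 0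
          jh fun ⟨s, hs⟩ => h (hs ▸ s.2)).symm
  rw [hfac, LinearMap.range_comp_of_range_eq_top _
      (LinearMap.range_eq_top.2 (LinearMap.funLeft_surjective_of_injective k k g hg)),
    LinearMap.finrank_range_of_inj
      (Function.extend_injective Subtype.val_injective (0 : intvSpace (k := k) β δ c)),
    Module.finrank_fintype_fun_eq_card, show Fintype.card S = _ from Fintype.card_congr
      (Equiv.subtypeSubtypeEquivSubtypeInter (fun j => β j ≤ c ∧ c ≤ δ j) (fun j => β j ≤ b)),
    Fintype.card_subtype]
  congr 1
  ext j
  simp only [mem_filter, mem_univ, true_and]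
  omega

lemma numContaining_eq_zero {b c : ℕ} (h : ∀ j, b < β j ∨ δ j < c) :
    numContaining β δ b c = 0 :=
  card_eq_zero.2 <| filter_eq_empty_iff.2 fun j _ hj => by have := h j; omega

lemma numContaining_eq_add (b c : ℕ) :
    numContaining β δ b c = numContaining β δ b (c + 1) + #{j | β j ≤ b ∧ δ j = c} :=
  card_filter_eq_add_of_iff (fun _ => by omega) (fun _ => by omega)

end IntervalModule

open IntervalModule

section ChainMap

variable {k : Type} [Field k] {a : ℕ → ℕ} {Ms : ∀ i : ℕ, Matrix (Fin (a (i + 1))) (Fin (a i)) k}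

lemma chainMap_eq_zero {i b : ℕ} (hi : Ms i = 0) (hbi : b ≤ i) :
    ∀ {len : ℕ}, i < b + len → chainMap a Ms b len = 0
  | 0, h => absurd h (by omega)
  | len + 1, h => by
    obtain rfl | hlt := (show i ≤ b + len by omega).eq_or_lt
    · simp [chainMap, hi]
    · simp [chainMap, chainMap_eq_zero hi hbi hlt]

lemma chainRank_eq_zero {i b d : ℕ} (hi : Ms i = 0) (hbi : b ≤ i) (hid : i ≤ d) :
    chainRank a Ms b d = 0 := by
  rw [chainRank, chainMap_eq_zero hi hbi (by omega), LinearMap.range_zero, finrank_bot]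

end ChainMap

/-- An isomorphism of `M`, restricted to the vertices `1, …, n`, onto `⊕_j I(β j, δ j)`. -/
structure IntervalDecomposition {k : Type} [Field k] (n : ℕ) (a : ℕ → ℕ)
    (Ms : ∀ i : ℕ, Matrix (Fin (a (i + 1))) (Fin (a i)) k) {N : ℕ} (β δ : Fin N → ℕ) where
  equiv : ∀ i : ℕ, 1 ≤ i → i ≤ n → ((Fin (a i) → k) ≃ₗ[k] intvSpace (k := k) β δ i)
  intvStep_equiv : ∀ (i : ℕ) (h1 : 1 ≤ i) (h2 : i < n) (x : Fin (a i) → k),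
    intvStep β δ i (equiv i h1 h2.le x) = equiv (i + 1) (Nat.le_succ_of_le h1) h2 ((Ms i).mulVec x)

namespace IntervalDecomposition

variable {k : Type} [Field k] {n : ℕ} {a : ℕ → ℕ}
  {Ms : ∀ i : ℕ, Matrix (Fin (a (i + 1))) (Fin (a i)) k} {N : ℕ} {β δ : Fin N → ℕ}

lemma equiv_chainMap (D : IntervalDecomposition n a Ms β δ) {b : ℕ} (hb : 1 ≤ b) :
    ∀ (len : ℕ) (h : b + len ≤ n) (x : Fin (a b) → k),
      D.equiv (b + len) (by omega) h (chainMap a Ms b len x)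
        = intvMap β δ b (b + len) (D.equiv b hb (by omega) x)
  | 0, h, x => by simp [chainMap, intvMap_self]
  | len + 1, h, x => by
    have hlen : b + len < n := by omega
    calc D.equiv (b + len + 1) (by omega) h (chainMap a Ms b (len + 1) x)
        = intvStep β δ (b + len) (D.equiv (b + len) (by omega) hlen.le (chainMap a Ms b len x)) :=
          (D.intvStep_equiv (b + len) (by omega) hlen _).symm
      _ = intvMap β δ b (b + len + 1) (D.equiv b hb (by omega) x) := by
          rw [equiv_chainMap D hb len hlen.le, intvStep_eq_intvMap, ← LinearMap.comp_apply,
            intvMap_comp β δ (by omega) (by omega)]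

lemma chainRank_eq_numContaining (D : IntervalDecomposition n a Ms β δ) {b d : ℕ} (hb : 1 ≤ b)
    (hbd : b ≤ d) (hdn : d < n) : chainRank a Ms b d = numContaining β δ b (d + 1) := by
  have hlen : b + (d + 1 - b) ≤ n := by omega
  have hcomm : (D.equiv _ (by omega) hlen).toLinearMap ∘ₗ chainMap a Ms b (d + 1 - b)
      = intvMap β δ b _ ∘ₗ (D.equiv b hb (by omega)).toLinearMap :=
    LinearMap.ext (D.equiv_chainMap hb _ hlen)
  rw [chainRank, ← LinearEquiv.finrank_map_eq (D.equiv _ (by omega) hlen), ← LinearMap.range_comp,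
    hcomm, LinearEquiv.range_comp, finrank_range_intvMap β δ (by omega)]
  congr 1
  omega

lemma dim_eq_numContaining (D : IntervalDecomposition n a Ms β δ) {b : ℕ} (hb : 1 ≤ b)
    (hbn : b ≤ n) : a b = numContaining β δ b b := by
  rw [← finrank_intvSpace (k := k), ← (D.equiv b hb hbn).finrank_eq, Module.finrank_fin_fun]

/-- The conventions `M_0 = 0` and `M_n = 0` extend `chainRank_eq_numContaining` to the
boundary vertices. -/
lemma chainRank_eq_numContaining_of_le (D : IntervalDecomposition n a Ms β δ) (hMs0 : Ms 0 = 0)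
    (hMsn : Ms n = 0) (hβ : ∀ j, 1 ≤ β j) (hδ : ∀ j, δ j ≤ n) {b d : ℕ} (hbd : b ≤ d)
    (hdn : d ≤ n) : chainRank a Ms b d = numContaining β δ b (d + 1) := by
  obtain rfl | hb := Nat.eq_zero_or_pos b
  · rw [chainRank_eq_zero hMs0 le_rfl (Nat.zero_le d),
      numContaining_eq_zero β δ fun j => Or.inl (hβ j)]
  obtain rfl | hdn := hdn.eq_or_lt
  · rw [chainRank_eq_zero hMsn hbd le_rfl,
      numContaining_eq_zero β δ fun j => Or.inr (Nat.lt_succ_of_le (hδ j))]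
  exact D.chainRank_eq_numContaining hb hbd hdn

lemma Rquant_eq_neg_card (D : IntervalDecomposition n a Ms β δ) (hMs0 : Ms 0 = 0)
    (hMsn : Ms n = 0) (hβ : ∀ j, 1 ≤ β j) (hδ : ∀ j, δ j ≤ n) {b d : ℕ} (hd : 0 < d)
    (hbd : b ≤ d) (hdn : d ≤ n) :
    Rquant a Ms b d = -(#{j | β j ≤ b ∧ δ j = d} : ℤ) := by
  have hsplit := numContaining_eq_add β δ b d
  have hrank := D.chainRank_eq_numContaining_of_le hMs0 hMsn hβ hδ hbd hdn
  unfold Rquant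
  split_ifs with hlt
  · obtain ⟨d, rfl⟩ : ∃ d', d = d' + 1 := ⟨d - 1, by omega⟩
    rw [Nat.add_sub_cancel, hrank,
      D.chainRank_eq_numContaining_of_le hMs0 hMsn hβ hδ (by omega) (by omega)]
    omega
  · obtain rfl : b = d := by omega
    rw [hrank, D.dim_eq_numContaining hd hdn]
    omega

end IntervalDecomposition

/-- with `R(b,d)` as above (and conventions `Ms 0 = 0`, `Ms n = 0`), the
multiplicity of the interval module `I(b,d)` in the indecomposable decomposition of `M`
equals `R(b-1,d) - R(b,d)`. -/
theorem interval_multiplicity_R {k : Type} [Field k] (n : ℕ) (a : ℕ → ℕ)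
    (Ms : ∀ i : ℕ, Matrix (Fin (a (i + 1))) (Fin (a i)) k)
    (hMs0 : Ms 0 = 0) (hMsn : Ms n = 0)
    (N : ℕ) (β δ : Fin N → ℕ) (hβδ : ∀ j, 1 ≤ β j ∧ β j ≤ δ j ∧ δ j ≤ n)
    (e : ∀ i : ℕ, 1 ≤ i → i ≤ n → ((Fin (a i) → k) ≃ₗ[k] intvSpace (k := k) β δ i))
    (he : ∀ (i : ℕ) (h1 : 1 ≤ i) (h2 : i < n) (x : Fin (a i) → k),
      intvStep β δ i (e i h1 (le_of_lt h2) x)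
        = e (i + 1) (Nat.le_succ_of_le h1) h2 ((Ms i).mulVec x))
    (b d : ℕ) (hb : 1 ≤ b) (hbd : b ≤ d) (hdn : d ≤ n) :
    ((Finset.univ.filter (fun j => β j = b ∧ δ j = d)).card : ℤ)
      = Rquant a Ms (b - 1) d - Rquant a Ms b d := by
  have hβ : ∀ j, 1 ≤ β j := fun j => (hβδ j).1
  have hδ : ∀ j, δ j ≤ n := fun j => (hβδ j).2.2
  let D : IntervalDecomposition n a Ms β δ := ⟨e, he⟩
  obtain ⟨b, rfl⟩ : ∃ b', b = b' + 1 := ⟨b - 1, by omega⟩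
  have hsplit : #{j | β j ≤ b + 1 ∧ δ j = d}
      = #{j | β j ≤ b ∧ δ j = d} + #{j | β j = b + 1 ∧ δ j = d} :=
    card_filter_eq_add_of_iff (fun _ => by omega) (fun _ => by omega)
  rw [Nat.add_sub_cancel, D.Rquant_eq_neg_card hMs0 hMsn hβ hδ (by omega) (by omega) hdn,
    D.Rquant_eq_neg_card hMs0 hMsn hβ hδ (by omega) hbd hdn, hsplit]
  push_cast
  ring
end

section
/- Let M = (M(α), M(β)) be a representation of the Kronecker quiver (two arrows 1 ⇉ 2) with M(α), M(β) ∈ Mat_{d_2,d_1}(k). For n ≥ 2, dim Hom(P_n, M) = (n-1)d_1 - rank P_{n-1}(M), where P_n is the preprojective Kronecker representation ([E_{n-1}; 0], [0; E_{n-1}]) of dimension vector (n-1,n), and P_{n-1}(M) is the (n-2)×(n-1) block matrix with M(β) on the block diagonal and M(α) on the block superdiagonal. Also dim Hom(P_1, M) = d_2. -/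
/-- `[E_{n-1}; 0]`: the `n × (n-1)` matrix defining the arrow `α` of the preprojective
Kronecker representation `P_n`. -/
def prepA {k : Type} [Field k] (n : ℕ) : Matrix (Fin n) (Fin (n - 1)) k :=
  fun i j => if (i : ℕ) = (j : ℕ) then 1 else 0

/-- `[0; E_{n-1}]`: the `n × (n-1)` matrix defining the arrow `β` of the preprojective
Kronecker representation `P_n`. -/
def prepB {k : Type} [Field k] (n : ℕ) : Matrix (Fin n) (Fin (n - 1)) k :=
  fun i j => if (i : ℕ) = (j : ℕ) + 1 then 1 else 0

/-- The space of morphisms of Kronecker representations `P_n → M`: pairs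
`(X, Y)` with `M(α) X = Y P_n(α)` and `M(β) X = Y P_n(β)`. -/
def homFromPrep {k : Type} [Field k] (d1 d2 n : ℕ)
    (Mα Mβ : Matrix (Fin d2) (Fin d1) k) :
    Submodule k (Matrix (Fin d1) (Fin (n - 1)) k × Matrix (Fin d2) (Fin n) k) where
  carrier := {p | Mα * p.1 = p.2 * prepA n ∧ Mβ * p.1 = p.2 * prepB n}
  add_mem' := by
    rintro x y ⟨hx1, hx2⟩ ⟨hy1, hy2⟩
    constructor <;> simp only [Prod.fst_add, Prod.snd_add, Matrix.mul_add,
      Matrix.add_mul, hx1, hx2, hy1, hy2]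
    all_goals exact (Matrix.add_mul _ _ _).symm
  zero_mem' := by
    simp
    exact ⟨(Matrix.zero_mul _).symm, (Matrix.zero_mul _).symm⟩
  smul_mem' := by
    rintro c x ⟨hx1, hx2⟩
    constructor <;> simp only [Prod.smul_fst, Prod.smul_snd, Matrix.mul_smul,
      Matrix.smul_mul, hx1, hx2]
    all_goals exact (Matrix.smul_mul _ _ _).symm

/-- The block matrix `P_n(M)` with `n - 1` block rows and `n` block columns, with
`M(β)` on the block diagonal and `M(α)` on the block superdiagonal. -/
def prepBlockMat {k : Type} [Field k] (d1 d2 : ℕ) (Mα Mβ : Matrix (Fin d2) (Fin d1) k)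
    (n : ℕ) : Matrix (Fin (n - 1) × Fin d2) (Fin n × Fin d1) k :=
  fun rp cq =>
    if (cq.1 : ℕ) = (rp.1 : ℕ) then Mβ rp.2 cq.2
    else if (cq.1 : ℕ) = (rp.1 : ℕ) + 1 then Mα rp.2 cq.2 else 0

/-!
A morphism `(X, Y) : P_n → M` is determined by `X`: the equations say that the columns of `Y`
are those of `M(α) X` followed by the last column of `M(β) X`, and such a `Y` exists iff
`M(β) x_i = M(α) x_{i+1}` for consecutive columns of `X`. After the sign change
`x_i ↦ (-1)^i x_i` these are exactly the equations `P_{n-1}(M) x = 0`, so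
`Hom(P_n, M) ≅ ker P_{n-1}(M)` and rank–nullity gives the formula. For `n = 1`, `X` is empty and
there are no equations.
-/

section PreprojectiveMatrices

variable {k : Type} [Field k] {ι : Type*} {m : ℕ}

theorem mul_prepA_apply (Y : Matrix ι (Fin (m + 1)) k) (r : ι) (j : Fin m) :
    (Y * prepA (m + 1) : Matrix ι (Fin m) k) r j = Y r j.castSucc := by
  -- `Matrix.mul_apply` does not match syntactically: the column type is `Fin (m + 1 - 1)`.
  change ∑ i, Y r i * prepA (m + 1) i j = _
  rw [Finset.sum_eq_single j.castSucc]
  · simp [prepA]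
  · intro i _ hi
    have hij : (i : ℕ) ≠ j := fun h => hi (Fin.ext h)
    simp [prepA, hij]
  · simp

theorem mul_prepB_apply (Y : Matrix ι (Fin (m + 1)) k) (r : ι) (j : Fin m) :
    (Y * prepB (m + 1) : Matrix ι (Fin m) k) r j = Y r j.succ := by
  change ∑ i, Y r i * prepB (m + 1) i j = _
  rw [Finset.sum_eq_single j.succ]
  · simp [prepB]
  · intro i _ hi
    have hij : (i : ℕ) ≠ j + 1 := fun h => hi (Fin.ext h)
    simp [prepB, hij]
  · simp

end PreprojectiveMatrices

section HomFromPreprojective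

variable {k : Type} [Field k] {d1 d2 m : ℕ} {Mα Mβ : Matrix (Fin d2) (Fin d1) k}

theorem mem_homFromPrep_iff {X : Matrix (Fin d1) (Fin (m + 1)) k}
    {Y : Matrix (Fin d2) (Fin (m + 2)) k} :
    (X, Y) ∈ homFromPrep d1 d2 (m + 2) Mα Mβ ↔
      (∀ r j, (Mα * X) r j = Y r j.castSucc) ∧ ∀ r j, (Mβ * X) r j = Y r j.succ := by
  change _ ∧ _ ↔ _
  simp only [← Matrix.ext_iff, mul_prepA_apply, mul_prepB_apply]
  exact Iff.rfl

theorem eq_zero_of_zero_mem_homFromPrep {Y : Matrix (Fin d2) (Fin (m + 2)) k}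
    (h : (0, Y) ∈ homFromPrep d1 d2 (m + 2) Mα Mβ) : Y = 0 := by
  obtain ⟨hα, hβ⟩ := mem_homFromPrep_iff.mp h
  ext r i
  induction i using Fin.lastCases with
  | last => simpa using (hβ r (Fin.last m)).symm
  | cast j => simpa using (hα r j).symm

theorem exists_mem_homFromPrep_iff (X : Matrix (Fin d1) (Fin (m + 1)) k) :
    (∃ Y, (X, Y) ∈ homFromPrep d1 d2 (m + 2) Mα Mβ) ↔
      ∀ r (i : Fin m), (Mβ * X) r i.castSucc = (Mα * X) r i.succ := by
  constructor
  · rintro ⟨Y, hY⟩ r i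
    obtain ⟨hα, hβ⟩ := mem_homFromPrep_iff.mp hY
    rw [hα, hβ, Fin.succ_castSucc]
  · intro hX
    refine ⟨fun r => Fin.snoc (fun j => (Mα * X) r j) ((Mβ * X) r (Fin.last m)),
      mem_homFromPrep_iff.mpr ⟨fun r j => by simp, fun r j => ?_⟩⟩
    induction j using Fin.lastCases with
    | last => simp
    | cast i => rw [Fin.succ_castSucc, Fin.snoc_castSucc, hX]

end HomFromPreprojective

section AlternatingVec

variable {R : Type*} [CommRing R] {ι : Type*} {n : ℕ}

def alternatingVec : Matrix ι (Fin n) R ≃ₗ[R] (Fin n × ι → R) where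
  toFun X jq := (-1) ^ (jq.1 : ℕ) * X jq.2 jq.1
  invFun v q j := (-1) ^ (j : ℕ) * v (j, q)
  map_add' X X' := by ext; simp [mul_add]
  map_smul' c X := by ext; simp [mul_left_comm]
  left_inv X := by ext; simp [← mul_assoc, ← mul_pow]
  right_inv v := by ext; simp [← mul_assoc, ← mul_pow]

theorem alternatingVec_apply (X : Matrix ι (Fin n) R) (j : Fin n) (q : ι) :
    alternatingVec X (j, q) = (-1) ^ (j : ℕ) * X q j := rfl

end AlternatingVec

section PrepBlockMat

open Matrix

variable {k : Type} [Field k] {d1 d2 m : ℕ} {Mα Mβ : Matrix (Fin d2) (Fin d1) k}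

theorem prepBlockMat_mulVec_apply (v : Fin (m + 1) × Fin d1 → k) (i : Fin m) (r : Fin d2) :
    (prepBlockMat d1 d2 Mα Mβ (m + 1) *ᵥ v) (i, r)
      = (Mβ *ᵥ fun q => v (i.castSucc, q)) r + (Mα *ᵥ fun q => v (i.succ, q)) r := by
  rw [mulVec, dotProduct, Fintype.sum_prod_type, Fintype.sum_eq_add i.castSucc i.succ
    (Fin.castSucc_lt_succ (i := i)).ne]
  · simp [prepBlockMat, mulVec, dotProduct]
  · rintro j ⟨hj, hj'⟩
    have h1 : (j : ℕ) ≠ i := fun h => hj (Fin.ext h)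
    have h2 : (j : ℕ) ≠ i + 1 := fun h => hj' (Fin.ext h)
    simp [prepBlockMat, h1, h2]

theorem prepBlockMat_mulVec_alternatingVec_apply (X : Matrix (Fin d1) (Fin (m + 1)) k)
    (i : Fin m) (r : Fin d2) :
    (prepBlockMat d1 d2 Mα Mβ (m + 1) *ᵥ alternatingVec X) (i, r)
      = (-1) ^ (i : ℕ) * ((Mβ * X) r i.castSucc - (Mα * X) r i.succ) := by
  rw [prepBlockMat_mulVec_apply, mul_sub, sub_eq_add_neg]
  simp only [mulVec, dotProduct, mul_apply, alternatingVec_apply, Fin.val_castSucc, Fin.val_succ,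
    Finset.mul_sum, ← Finset.sum_neg_distrib]
  congr 1 <;> exact Finset.sum_congr rfl fun q _ => by ring

theorem prepBlockMat_mulVec_alternatingVec_eq_zero_iff (X : Matrix (Fin d1) (Fin (m + 1)) k) :
    prepBlockMat d1 d2 Mα Mβ (m + 1) *ᵥ alternatingVec X = 0 ↔
      ∀ r (i : Fin m), (Mβ * X) r i.castSucc = (Mα * X) r i.succ := by
  simp only [funext_iff, Prod.forall, Pi.zero_apply, prepBlockMat_mulVec_alternatingVec_apply,
    mul_eq_zero, pow_eq_zero_iff', neg_eq_zero, one_ne_zero, false_and, false_or, sub_eq_zero]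
  exact forall_comm

end PrepBlockMat

section Dimension

open Matrix Module

variable {k : Type} [Field k] {d1 d2 : ℕ} (Mα Mβ : Matrix (Fin d2) (Fin d1) k)

theorem finrank_homFromPrep_eq_finrank_ker (m : ℕ) :
    finrank k (homFromPrep d1 d2 (m + 2) Mα Mβ)
      = finrank k (LinearMap.ker (prepBlockMat d1 d2 Mα Mβ (m + 1)).mulVecLin) := by
  let f : homFromPrep d1 d2 (m + 2) Mα Mβ →ₗ[k] (Fin (m + 1) × Fin d1 → k) :=
    alternatingVec.toLinearMap ∘ₗ LinearMap.fst k _ _ ∘ₗ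
      (homFromPrep d1 d2 (m + 2) Mα Mβ).subtype
  have hf : Function.Injective f := by
    rw [← LinearMap.ker_eq_bot, LinearMap.ker_eq_bot']
    rintro ⟨⟨X, Y⟩, hXY⟩ h
    obtain rfl : X = 0 := alternatingVec.map_eq_zero_iff.mp h
    obtain rfl := eq_zero_of_zero_mem_homFromPrep hXY
    rfl
  have hrange :
      LinearMap.range f = LinearMap.ker (prepBlockMat d1 d2 Mα Mβ (m + 1)).mulVecLin := by
    ext v
    obtain ⟨X, rfl⟩ := alternatingVec.surjective v
    simp only [LinearMap.mem_range, LinearMap.mem_ker, mulVecLin_apply,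
      prepBlockMat_mulVec_alternatingVec_eq_zero_iff, ← exists_mem_homFromPrep_iff]
    constructor
    · rintro ⟨⟨⟨X', Y⟩, hXY⟩, hX'⟩
      obtain rfl : X' = X := alternatingVec.injective hX'
      exact ⟨Y, hXY⟩
    · rintro ⟨Y, hXY⟩
      exact ⟨⟨(X, Y), hXY⟩, rfl⟩
  rw [← LinearMap.finrank_range_of_inj hf, hrange]

theorem finrank_homFromPrep_add_two (m : ℕ) :
    finrank k (homFromPrep d1 d2 (m + 2) Mα Mβ)
      = (m + 1) * d1 - (prepBlockMat d1 d2 Mα Mβ (m + 1)).rank := by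
  have rank_nullity :=
    LinearMap.finrank_range_add_finrank_ker (prepBlockMat d1 d2 Mα Mβ (m + 1)).mulVecLin
  rw [finrank_pi, Fintype.card_prod, Fintype.card_fin, Fintype.card_fin] at rank_nullity
  rw [finrank_homFromPrep_eq_finrank_ker, rank]
  omega

theorem homFromPrep_one_eq_top : homFromPrep d1 d2 1 Mα Mβ = ⊤ :=
  eq_top_iff.mpr fun _ _ => ⟨ext fun _ j => j.elim0, ext fun _ j => j.elim0⟩

end Dimension

/-- for a Kronecker representation `M = (M(α), M(β))`,
`dim Hom(P_n, M) = (n-1) d_1 - rank P_{n-1}(M)` for `n ≥ 2`, and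
`dim Hom(P_1, M) = d_2`.  (Note `rank P_1(M) = 0` since `P_1(M)` is empty.) -/
theorem dim_hom_from_preprojective {k : Type} [Field k] (d1 d2 : ℕ)
    (Mα Mβ : Matrix (Fin d2) (Fin d1) k) :
    (∀ n : ℕ, 2 ≤ n →
      Module.finrank k (homFromPrep d1 d2 n Mα Mβ)
        = (n - 1) * d1 - (prepBlockMat d1 d2 Mα Mβ (n - 1)).rank) ∧
    Module.finrank k (homFromPrep d1 d2 1 Mα Mβ) = d2 := by
  refine ⟨fun n hn => ?_, ?_⟩
  · obtain ⟨m, rfl⟩ : ∃ m, n = m + 2 := ⟨n - 2, by omega⟩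
    exact finrank_homFromPrep_add_two Mα Mβ m
  · rw [homFromPrep_one_eq_top, finrank_top, Module.finrank_prod, Module.finrank_matrix,
      Module.finrank_matrix]
    simp
end

section
/- Let M = (M(α), M(β)) be a representation of the Kronecker quiver with M(α), M(β) ∈ Mat_{d_2,d_1}(k). For n ≥ 1, dim Hom(I_n, M) = n·d_1 - rank I_n(M), where I_n is the preinjective Kronecker representation ([E_{n-1}, 0], [0, E_{n-1}]) with dimension vector (n, n-1), and I_n(M) is the (n+1)×n block matrix with M(β) on the block diagonal and M(α) on the block subdiagonal. -/
/-- `[E_{n-1}, 0]`: the `(n-1) × n` matrix defining the arrow `α` of the preinjective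
Kronecker representation `I_n`. -/
def preinjA {k : Type} [Field k] (n : ℕ) : Matrix (Fin (n - 1)) (Fin n) k :=
  fun i j => if (i : ℕ) = (j : ℕ) then 1 else 0

/-- `[0, E_{n-1}]`: the `(n-1) × n` matrix defining the arrow `β` of the preinjective
Kronecker representation `I_n`. -/
def preinjB {k : Type} [Field k] (n : ℕ) : Matrix (Fin (n - 1)) (Fin n) k :=
  fun i j => if (i : ℕ) + 1 = (j : ℕ) then 1 else 0

/-- The space of morphisms of Kronecker representations `I_n → M`: pairs `(X, Y)` with
`M(α) X = Y I_n(α)` and `M(β) X = Y I_n(β)`. -/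
def homFromPreinj {k : Type} [Field k] (d1 d2 n : ℕ)
    (Mα Mβ : Matrix (Fin d2) (Fin d1) k) :
    Submodule k (Matrix (Fin d1) (Fin n) k × Matrix (Fin d2) (Fin (n - 1)) k) where
  carrier := {p | Mα * p.1 = p.2 * preinjA n ∧ Mβ * p.1 = p.2 * preinjB n}
  add_mem' := by
    rintro x y ⟨hx1, hx2⟩ ⟨hy1, hy2⟩
    constructor <;> simp only [Prod.fst_add, Prod.snd_add, Matrix.mul_add,
      Matrix.add_mul, hx1, hx2, hy1, hy2]
    all_goals exact (Matrix.add_mul _ _ _).symm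
  zero_mem' := by
    simp
    exact ⟨(Matrix.zero_mul _).symm, (Matrix.zero_mul _).symm⟩
  smul_mem' := by
    rintro c x ⟨hx1, hx2⟩
    constructor <;> simp only [Prod.smul_fst, Prod.smul_snd, Matrix.mul_smul,
      Matrix.smul_mul, hx1, hx2]
    all_goals exact (Matrix.smul_mul _ _ _).symm

/-- The block matrix `I_n(M)` with `n + 1` block rows and `n` block columns, with
`M(β)` on the block diagonal and `M(α)` on the block subdiagonal. -/
def preinjBlockMat {k : Type} [Field k] (d1 d2 : ℕ) (Mα Mβ : Matrix (Fin d2) (Fin d1) k)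
    (n : ℕ) : Matrix (Fin (n + 1) × Fin d2) (Fin n × Fin d1) k :=
  fun rp cq =>
    if (rp.1 : ℕ) = (cq.1 : ℕ) then Mβ rp.2 cq.2
    else if (rp.1 : ℕ) = (cq.1 : ℕ) + 1 then Mα rp.2 cq.2 else 0

/-!
A morphism `(X, Y) : I_n → M` is determined by `X`: the columns of `Y` are the first `n - 1`
columns of `M(α) X`. Writing `x₀, …, x_{n-1}` for the columns of `X` and `x_{-1} = x_n = 0`,
such a `Y` exists iff `M(β) xᵢ = M(α) x_{i-1}` for `0 ≤ i ≤ n`. Block row `i` of `I_n(M)`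
applied to the vector with blocks `(-1)ʲ xⱼ` is `(-1)ⁱ (M(β) xᵢ - M(α) x_{i-1})`, so
`X ↦ ((-1)ʲ xⱼ)ⱼ` identifies `Hom(I_n, M)` with `ker I_n(M)`, and rank–nullity gives the formula.
-/

open Matrix

section
variable {k : Type} [Field k] {m d1 d2 n : ℕ}

lemma mul_preinjA_apply (Y : Matrix (Fin m) (Fin (n - 1)) k) (r : Fin m) (j : Fin n) :
    (Y * preinjA n : Matrix (Fin m) (Fin n) k) r j =
      if h : (j : ℕ) < n - 1 then Y r ⟨j, h⟩ else 0 := by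
  -- The product elaborates through the `CStarMatrix` instance, which `Matrix.mul_apply` misses.
  change ∑ l, Y r l * preinjA n l j = _
  simp only [preinjA, mul_ite, mul_one, mul_zero]
  split_ifs with h
  · rw [Finset.sum_eq_single ⟨j, h⟩] <;> simp +contextual [Fin.ext_iff]
  · exact Finset.sum_eq_zero fun i _ => if_neg (by omega)

lemma mul_preinjB_apply (Y : Matrix (Fin m) (Fin (n - 1)) k) (r : Fin m) (j : Fin n) :
    (Y * preinjB n : Matrix (Fin m) (Fin n) k) r j =
      if h : 0 < (j : ℕ) then Y r ⟨j - 1, by omega⟩ else 0 := by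
  change ∑ l, Y r l * preinjB n l j = _
  simp only [preinjB, mul_ite, mul_one, mul_zero]
  split_ifs with h
  · rw [Finset.sum_eq_single ⟨j - 1, by omega⟩] <;> simp [Fin.ext_iff] <;> omega
  · exact Finset.sum_eq_zero fun i _ => if_neg (by omega)

lemma preinjBlockMat_mulVec_apply (Mα Mβ : Matrix (Fin d2) (Fin d1) k) (v : Fin n × Fin d1 → k)
    (i : Fin (n + 1)) (r : Fin d2) :
    (preinjBlockMat d1 d2 Mα Mβ n *ᵥ v) (i, r) =
      (if h : (i : ℕ) < n then ∑ c, Mβ r c * v (⟨i, h⟩, c) else 0) +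
      (if h : 0 < (i : ℕ) then ∑ c, Mα r c * v (⟨i - 1, by omega⟩, c) else 0) := by
  have hsplit : ∀ j : Fin n, ∑ c, preinjBlockMat d1 d2 Mα Mβ n (i, r) (j, c) * v (j, c) =
      (if (j : ℕ) = i then ∑ c, Mβ r c * v (j, c) else 0) +
      (if (j : ℕ) + 1 = i then ∑ c, Mα r c * v (j, c) else 0) := by
    intro j
    simp only [preinjBlockMat]
    split_ifs <;> first | omega | simp
  rw [mulVec, dotProduct, Fintype.sum_prod_type, Finset.sum_congr rfl fun j _ => hsplit j,
    Finset.sum_add_distrib]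
  congr 1
  · split_ifs with h
    · rw [Finset.sum_eq_single ⟨i, h⟩] <;> simp +contextual [Fin.ext_iff]
    · exact Finset.sum_eq_zero fun j _ => if_neg (by omega)
  · split_ifs with h
    · rw [Finset.sum_eq_single ⟨i - 1, by omega⟩] <;> simp +contextual [Fin.ext_iff] <;> omega
    · exact Finset.sum_eq_zero fun j _ => if_neg (by omega)

def signedVec : Matrix (Fin d1) (Fin n) k ≃ₗ[k] (Fin n × Fin d1 → k) where
  toFun X jc := (-1) ^ (jc.1 : ℕ) * X jc.2 jc.1
  invFun v c j := (-1) ^ (j : ℕ) * v (j, c)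
  map_add' X Y := by ext; simp [mul_add]
  map_smul' a X := by ext; simp [mul_left_comm]
  left_inv X := by ext; simp [← mul_assoc, ← mul_pow]
  right_inv v := by ext; simp [← mul_assoc, ← mul_pow]

@[simp]
lemma signedVec_apply (X : Matrix (Fin d1) (Fin n) k) (j : Fin n) (c : Fin d1) :
    signedVec X (j, c) = (-1) ^ (j : ℕ) * X c j :=
  rfl

def IsKroneckerChain (Mα Mβ : Matrix (Fin d2) (Fin d1) k) (X : Matrix (Fin d1) (Fin n) k) :
    Prop :=
  ∀ (i : Fin (n + 1)) (r : Fin d2),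
    (if h : (i : ℕ) < n then (Mβ * X) r ⟨i, h⟩ else 0) =
      if h : 0 < (i : ℕ) then (Mα * X) r ⟨i - 1, by omega⟩ else 0

lemma preinjBlockMat_mulVec_signedVec_apply (Mα Mβ : Matrix (Fin d2) (Fin d1) k)
    (X : Matrix (Fin d1) (Fin n) k) (i : Fin (n + 1)) (r : Fin d2) :
    (preinjBlockMat d1 d2 Mα Mβ n *ᵥ signedVec X) (i, r) =
      (-1) ^ (i : ℕ) * ((if h : (i : ℕ) < n then (Mβ * X) r ⟨i, h⟩ else 0) -
        if h : 0 < (i : ℕ) then (Mα * X) r ⟨i - 1, by omega⟩ else 0) := by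
  have hsign : ∀ j : ℕ, 0 < j → (-1 : k) ^ (j - 1) = -(-1) ^ j := by
    intro j hj
    obtain ⟨j, rfl⟩ := Nat.exists_eq_add_one_of_ne_zero hj.ne'
    simp [pow_succ]
  have hcol (M : Matrix (Fin d2) (Fin d1) k) (j : Fin n) :
      ∑ c, M r c * signedVec X (j, c) = (-1) ^ (j : ℕ) * (M * X) r j := by
    simp only [signedVec_apply, mul_apply, Finset.mul_sum, mul_left_comm]
  simp only [preinjBlockMat_mulVec_apply, hcol]
  split_ifs with h₁ h₂ h₂
  · rw [hsign _ h₂]; ring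
  · ring
  · rw [hsign _ h₂]; ring
  · ring

lemma preinjBlockMat_mulVec_signedVec_eq_zero_iff (Mα Mβ : Matrix (Fin d2) (Fin d1) k)
    (X : Matrix (Fin d1) (Fin n) k) :
    preinjBlockMat d1 d2 Mα Mβ n *ᵥ signedVec X = 0 ↔ IsKroneckerChain Mα Mβ X := by
  simp only [funext_iff, Prod.forall, Pi.zero_apply, preinjBlockMat_mulVec_signedVec_apply,
    mul_eq_zero, pow_eq_zero_iff', neg_eq_zero, one_ne_zero, false_and, false_or, sub_eq_zero]
  rfl

lemma snd_apply_of_mem_homFromPreinj {Mα Mβ : Matrix (Fin d2) (Fin d1) k}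
    {p : Matrix (Fin d1) (Fin n) k × Matrix (Fin d2) (Fin (n - 1)) k}
    (hp : p ∈ homFromPreinj d1 d2 n Mα Mβ) (r : Fin d2) (j : Fin (n - 1)) :
    p.2 r j = (Mα * p.1) r (Fin.castLE (n.sub_le 1) j) := by
  rw [hp.1, mul_preinjA_apply, Fin.val_castLE, dif_pos j.2]

lemma exists_mem_homFromPreinj_iff (Mα Mβ : Matrix (Fin d2) (Fin d1) k)
    (X : Matrix (Fin d1) (Fin n) k) :
    (∃ Y, (X, Y) ∈ homFromPreinj d1 d2 n Mα Mβ) ↔ IsKroneckerChain Mα Mβ X := by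
  constructor
  · rintro ⟨Y, hα, hβ⟩ i r
    simp only [hα, hβ, mul_preinjA_apply, mul_preinjB_apply]
    split_ifs <;> first | rfl | omega
  · intro hX
    refine ⟨fun r j => (Mα * X) r (Fin.castLE (n.sub_le 1) j), ?_, ?_⟩
    · ext r j
      rw [mul_preinjA_apply]
      split_ifs with h
      · rfl
      · obtain ⟨j, hj⟩ := j
        obtain rfl : j = n - 1 := by simp only at h; omega
        simpa [hj.pos] using (hX (Fin.last n) r).symm
    · ext r j
      rw [mul_preinjB_apply]
      split_ifs with h
      · simpa [h] using hX j.castSucc r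
      · obtain ⟨j, hj⟩ := j
        obtain rfl : j = 0 := by simp only at h; omega
        simpa [hj] using hX 0 r

lemma finrank_homFromPreinj_eq_finrank_ker (Mα Mβ : Matrix (Fin d2) (Fin d1) k) :
    Module.finrank k (homFromPreinj d1 d2 n Mα Mβ) =
      Module.finrank k (LinearMap.ker (preinjBlockMat d1 d2 Mα Mβ n).mulVecLin) := by
  set f := signedVec.toLinearMap ∘ₗ LinearMap.fst k _ _ ∘ₗ (homFromPreinj d1 d2 n Mα Mβ).subtype
  have hinj : Function.Injective f := by
    rintro ⟨⟨X, Y⟩, hp⟩ ⟨⟨X', Y'⟩, hp'⟩ h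
    obtain rfl : X = X' := signedVec.injective h
    ext r j : 3
    · rfl
    · rw [snd_apply_of_mem_homFromPreinj hp, snd_apply_of_mem_homFromPreinj hp']
  have hrange : LinearMap.range f = LinearMap.ker (preinjBlockMat d1 d2 Mα Mβ n).mulVecLin := by
    ext v
    obtain ⟨X, rfl⟩ := signedVec.surjective v
    rw [LinearMap.mem_ker, mulVecLin_apply, preinjBlockMat_mulVec_signedVec_eq_zero_iff,
      ← exists_mem_homFromPreinj_iff]
    constructor
    · rintro ⟨⟨⟨X', Y⟩, hp⟩, hX'⟩
      obtain rfl : X' = X := signedVec.injective hX'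
      exact ⟨Y, hp⟩
    · rintro ⟨Y, hp⟩
      exact ⟨⟨(X, Y), hp⟩, rfl⟩
  rw [← hrange, LinearMap.finrank_range_of_inj hinj]

end

theorem dim_hom_from_preinjective_general {k : Type} [Field k] (d1 d2 : ℕ)
    (Mα Mβ : Matrix (Fin d2) (Fin d1) k) (n : ℕ) :
    Module.finrank k (homFromPreinj d1 d2 n Mα Mβ)
      = n * d1 - (preinjBlockMat d1 d2 Mα Mβ n).rank := by
  have h := LinearMap.finrank_range_add_finrank_ker (preinjBlockMat d1 d2 Mα Mβ n).mulVecLin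
  rw [Module.finrank_fintype_fun_eq_card, Fintype.card_prod, Fintype.card_fin,
    Fintype.card_fin] at h
  rw [finrank_homFromPreinj_eq_finrank_ker, Matrix.rank]
  omega

/-- for a Kronecker representation `M = (M(α), M(β))` and `n ≥ 1`,
`dim Hom(I_n, M) = n d_1 - rank I_n(M)`. -/
theorem dim_hom_from_preinjective {k : Type} [Field k] (d1 d2 : ℕ)
    (Mα Mβ : Matrix (Fin d2) (Fin d1) k) (n : ℕ) (hn : 1 ≤ n) :
    Module.finrank k (homFromPreinj d1 d2 n Mα Mβ)
      = n * d1 - (preinjBlockMat d1 d2 Mα Mβ n).rank :=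
  dim_hom_from_preinjective_general d1 d2 Mα Mβ n
end
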